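/- Let f : ℝ³ → ℂ be continuously differentiable and compactly supported, and let v_f(t,x) := (1/4π) ∫_{S²} [ f(x+tω) + t ω·∇f(x+tω) ] dσ(ω) be the free cosine wave propagator applied to f. Then for every x ∈ ℝ³, ∫_0^∞ t |v_f(t,x)| dt ≤ (1/4π) ( ∫_{ℝ³} |f(y)|/|x−y| dy + ‖∇f‖_{L¹(ℝ³)} ) ≤ (1/2π) ‖∇f‖_{L¹(ℝ³)}; that is, ‖ t · cos(t√(−Δ)) f ‖_{L^∞_x L¹_t} ≲ ‖∇f‖_{L¹}. -/

import Mathlib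

/-! Bounding the spherical mean pointwise by `(1/4π) ∫_{S²} (t |f(x+tω)| + t² |∇f(x+tω)|) dσ(ω)`
and exchanging the `t`- and `ω`-integrals, polar coordinates around `x` turn the two terms into
`∫ |f(y)|/|x-y| dy` and `‖∇f‖₁`. For the second inequality, write
`f(x+rω) = -∫_r^∞ ∂ₛ f(x+sω) ds` along each ray; then by Tonelli
`∫_0^∞ r |f(x+rω)| dr ≤ ∫_0^∞ (s²/2) |∇f(x+sω)| ds`, i.e. `∫ |f(y)|/|x-y| dy ≤ ½ ‖∇f‖₁`
(in dimension `n + 2` the constant is `1/(n+1)`). -/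

set_option autoImplicit false

open MeasureTheory ENNReal Real

noncomputable section

/-- `ℝ³` as a Euclidean space. -/
abbrev R3 : Type := EuclideanSpace ℝ (Fin 3)

/-- The surface measure on the unit sphere `S² ⊂ ℝ³`. -/
def sphereMeasure : Measure (Metric.sphere (0 : R3) 1) :=
  (volume : Measure R3).toSphere

/-- The free cosine wave propagator (Kirchhoff formula):
`v_f(t,x) = (1/4π) ∫_{S²} [f(x+tω) + t ω·∇f(x+tω)] dσ(ω)`. -/
def cosProp (f : R3 → ℂ) (t : ℝ) (x : R3) : ℂ :=
  (1 / (4 * π)) • ∫ ω : Metric.sphere (0 : R3) 1,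
    (f (x + t • (ω : R3)) + t • (fderiv ℝ f (x + t • (ω : R3))) (ω : R3)) ∂sphereMeasure

open Set Metric Module

theorem HasCompactSupport.comp_add_smul {E F : Type*} [NormedAddCommGroup E] [NormedSpace ℝ E]
    [Zero F] {f : E → F} (hf : HasCompactSupport f) (x : E) {ω : E} (hω : ω ≠ 0) :
    HasCompactSupport fun s : ℝ ↦ f (x + s • ω) :=
  hf.comp_isClosedEmbedding ((Homeomorph.addLeft x).isClosedEmbedding.comp
    (isClosedEmbedding_smul_left hω))

section Ray

variable {E F : Type*} [NormedAddCommGroup E] [NormedSpace ℝ E]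
  [NormedAddCommGroup F] [NormedSpace ℝ F]

theorem hasDerivAt_comp_add_smul {f : E → F} (hf : Differentiable ℝ f) (x ω : E) (s : ℝ) :
    HasDerivAt (fun s : ℝ ↦ f (x + s • ω)) (fderiv ℝ f (x + s • ω) ω) s := by
  have hray : HasDerivAt (fun s : ℝ ↦ x + s • ω) ω s := by
    simpa using ((hasDerivAt_id s).smul_const ω).const_add x
  exact (hf _).hasFDerivAt.comp_hasDerivAt s hray

theorem enorm_le_lintegral_Ioi_enorm_fderiv [CompleteSpace F] {f : E → F} (hf : ContDiff ℝ 1 f)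
    (hsupp : HasCompactSupport f) (x : E) {ω : E} (hω : ω ≠ 0) (r : ℝ) :
    ‖f (x + r • ω)‖ₑ ≤ ∫⁻ s in Ioi r, ‖fderiv ℝ f (x + s • ω) ω‖ₑ := by
  have hderiv : deriv (fun s : ℝ ↦ f (x + s • ω)) = fun s ↦ fderiv ℝ f (x + s • ω) ω :=
    funext fun s ↦ (hasDerivAt_comp_add_smul (hf.differentiable one_ne_zero) x ω s).deriv
  have hray : ContDiff ℝ 1 fun s : ℝ ↦ f (x + s • ω) := hf.comp (by fun_prop)
  calc ‖f (x + r • ω)‖ₑ = ‖∫ s in Ioi r, fderiv ℝ f (x + s • ω) ω‖ₑ := by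
        rw [← hderiv, (hsupp.comp_add_smul x hω).integral_Ioi_deriv_eq hray, enorm_neg]
    _ ≤ _ := enorm_integral_le_lintegral_enorm _

theorem ContDiff.integrable_fderiv [MeasurableSpace E] [OpensMeasurableSpace E] (μ : Measure E)
    [IsFiniteMeasureOnCompacts μ] {f : E → F} (hf : ContDiff ℝ 1 f)
    (hsupp : HasCompactSupport f) : Integrable (fderiv ℝ f) μ :=
  (hf.continuous_fderiv one_ne_zero).integrable_of_hasCompactSupport (hsupp.fderiv ℝ)

end Ray

theorem lintegral_Ioo_ofReal_pow (n : ℕ) {s : ℝ} (hs : 0 ≤ s) :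
    ∫⁻ r in Ioo 0 s, ENNReal.ofReal (r ^ n) = ENNReal.ofReal (s ^ (n + 1) / (n + 1)) := by
  rw [← ofReal_integral_eq_lintegral_ofReal, ← integral_Ioc_eq_integral_Ioo,
    ← intervalIntegral.integral_of_le hs, integral_pow]
  · simp
  · exact (continuous_pow n).integrableOn_Icc.mono_set Ioo_subset_Icc_self
  · filter_upwards [ae_restrict_mem measurableSet_Ioo] with r hr
    exact pow_nonneg hr.1.le n

theorem lintegral_Ioi_ofReal_pow_mul_lintegral_Ioi (n : ℕ) {H : ℝ → ℝ≥0∞} (hH : Measurable H) :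
    ∫⁻ r in Ioi 0, ENNReal.ofReal (r ^ n) * ∫⁻ s in Ioi r, H s =
      ∫⁻ s in Ioi 0, ENNReal.ofReal (s ^ (n + 1) / (n + 1)) * H s := by
  set K : ℝ → ℝ → ℝ≥0∞ := fun r s ↦ {p : ℝ × ℝ | p.1 < p.2}.indicator
    (fun p ↦ ENNReal.ofReal (p.1 ^ n) * H p.2) (r, s)
  have hK : Measurable (Function.uncurry K) :=
    (Measurable.indicator (by fun_prop) (measurableSet_lt measurable_fst measurable_snd))
  calc ∫⁻ r in Ioi 0, ENNReal.ofReal (r ^ n) * ∫⁻ s in Ioi r, H s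
      = ∫⁻ r in Ioi 0, ∫⁻ s in Ioi 0, K r s := by
        refine setLIntegral_congr_fun measurableSet_Ioi fun r (hr : 0 < r) ↦ ?_
        have hKr : K r = (Ioi r).indicator fun s ↦ ENNReal.ofReal (r ^ n) * H s := by
          ext s; simp [K, indicator_apply]
        rw [hKr, lintegral_indicator measurableSet_Ioi, Measure.restrict_restrict measurableSet_Ioi,
          Ioi_inter_Ioi, sup_eq_left.2 hr.le, lintegral_const_mul _ hH]
    _ = ∫⁻ s in Ioi 0, ∫⁻ r in Ioi 0, K r s := lintegral_lintegral_swap hK.aemeasurable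
    _ = _ := by
        refine setLIntegral_congr_fun measurableSet_Ioi fun s (hs : 0 < s) ↦ ?_
        have hKs : (K · s) = (Iio s).indicator fun r ↦ ENNReal.ofReal (r ^ n) * H s := by
          ext r; simp [K, indicator_apply]
        rw [hKs, lintegral_indicator measurableSet_Iio, Measure.restrict_restrict measurableSet_Iio,
          Iio_inter_Ioi, lintegral_mul_const _ (by fun_prop), lintegral_Ioo_ofReal_pow n hs.le]

section Polar

variable {E : Type*} [NormedAddCommGroup E] [NormedSpace ℝ E] [FiniteDimensional ℝ E]
  [Nontrivial E] [MeasurableSpace E] [BorelSpace E] (μ : Measure E) [μ.IsAddHaarMeasure]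
  {F : Type*} [NormedAddCommGroup F]

theorem lintegral_eq_lintegral_toSphere_lintegral_Ioi {g : E → ℝ≥0∞} (hg : Measurable g) :
    ∫⁻ y, g y ∂μ = ∫⁻ ω, ∫⁻ r in Ioi (0 : ℝ),
      ENNReal.ofReal (r ^ (finrank ℝ E - 1)) * g (r • (ω : E)) ∂volume ∂μ.toSphere := by
  set G : sphere (0 : E) 1 × Ioi (0 : ℝ) → ℝ≥0∞ := fun p ↦ g (p.2.1 • p.1.1)
  have hG : Measurable G := hg.comp (by fun_prop)
  calc ∫⁻ y, g y ∂μ = ∫⁻ y : ({0}ᶜ : Set E), g y ∂μ.comap (↑) := by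
        rw [lintegral_subtype_comap (measurableSet_singleton _).compl, restrict_compl_singleton]
    _ = ∫⁻ p, G p ∂μ.toSphere.prod (Measure.volumeIoiPow (finrank ℝ E - 1)) := by
        rw [← (μ.measurePreserving_homeomorphUnitSphereProd).map_eq,
          lintegral_map hG (homeomorphUnitSphereProd E).measurable]
        refine lintegral_congr fun y ↦ ?_
        simp [G, smul_inv_smul₀ (norm_ne_zero_iff.2 y.2)]
    _ = _ := by
        rw [lintegral_prod _ hG.aemeasurable]
        refine lintegral_congr fun ω ↦ ?_
        rw [Measure.volumeIoiPow, lintegral_withDensity_eq_lintegral_mul _ (by fun_prop)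
          (g := fun r ↦ G (ω, r)) (hG.comp measurable_prodMk_left)]
        exact lintegral_subtype_comap measurableSet_Ioi
          (fun r ↦ ENNReal.ofReal (r ^ (finrank ℝ E - 1)) * g (r • (ω : E)))

theorem lintegral_toSphere_lintegral_Ioi_add (x : E) {g : E → ℝ≥0∞} (hg : Measurable g) :
    ∫⁻ ω, ∫⁻ r in Ioi (0 : ℝ),
      ENNReal.ofReal (r ^ (finrank ℝ E - 1)) * g (x + r • (ω : E)) ∂volume ∂μ.toSphere =
      ∫⁻ y, g y ∂μ := by
  rw [← lintegral_add_left_eq_self g x,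
    lintegral_eq_lintegral_toSphere_lintegral_Ioi μ (g := fun y ↦ g (x + y))
      (hg.comp (measurable_const_add x))]

theorem lintegral_norm_div_norm_sub_eq {n : ℕ} (hd : finrank ℝ E = n + 2) {f : E → F}
    (hf : Continuous f) (x : E) :
    ∫⁻ y, ENNReal.ofReal (‖f y‖ / ‖x - y‖) ∂μ =
      ∫⁻ ω, ∫⁻ r in Ioi (0 : ℝ), ENNReal.ofReal (r ^ n) * ‖f (x + r • (ω : E))‖ₑ
        ∂volume ∂μ.toSphere := by
  rw [← lintegral_toSphere_lintegral_Ioi_add μ x (by fun_prop), hd,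
    show n + 2 - 1 = n + 1 from rfl]
  refine lintegral_congr fun ω ↦
    setLIntegral_congr_fun measurableSet_Ioi fun r (hr : 0 < r) ↦ ?_
  have hω : ‖(ω : E)‖ = 1 := norm_eq_of_mem_sphere ω
  rw [sub_add_cancel_left, norm_neg, norm_smul, hω, mul_one, Real.norm_of_nonneg hr.le,
    ← ENNReal.ofReal_mul (by positivity), ← ofReal_norm, ← ENNReal.ofReal_mul (by positivity)]
  congr 1
  field_simp
  ring

theorem lintegral_norm_div_norm_sub_le [NormedSpace ℝ F] [CompleteSpace F] {n : ℕ}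
    (hd : finrank ℝ E = n + 2) {f : E → F} (hf : ContDiff ℝ 1 f) (hsupp : HasCompactSupport f)
    (x : E) :
    ∫⁻ y, ENNReal.ofReal (‖f y‖ / ‖x - y‖) ∂μ ≤ (n + 1 : ℝ≥0∞)⁻¹ * ∫⁻ y, ‖fderiv ℝ f y‖ₑ ∂μ := by
  have hDf : Continuous (fderiv ℝ f) := hf.continuous_fderiv one_ne_zero
  rw [lintegral_norm_div_norm_sub_eq μ hd hf.continuous x,
    ← lintegral_toSphere_lintegral_Ioi_add μ x hDf.enorm.measurable, hd,
    show n + 2 - 1 = n + 1 from rfl, ← lintegral_const_mul' _ _ (by simp)]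
  refine lintegral_mono fun ω ↦ ?_
  have hω : ‖(ω : E)‖ = 1 := norm_eq_of_mem_sphere ω
  have hω0 : (ω : E) ≠ 0 := ne_zero_of_mem_unit_sphere ω
  calc ∫⁻ r in Ioi 0, ENNReal.ofReal (r ^ n) * ‖f (x + r • (ω : E))‖ₑ
      ≤ ∫⁻ r in Ioi 0, ENNReal.ofReal (r ^ n) *
          ∫⁻ s in Ioi r, ‖fderiv ℝ f (x + s • (ω : E)) ω‖ₑ := by
        gcongr with r
        exact enorm_le_lintegral_Ioi_enorm_fderiv hf hsupp x hω0 r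
    _ = ∫⁻ s in Ioi 0, ENNReal.ofReal (s ^ (n + 1) / (n + 1)) *
          ‖fderiv ℝ f (x + s • (ω : E)) ω‖ₑ :=
        lintegral_Ioi_ofReal_pow_mul_lintegral_Ioi n
          ((hDf.comp (by fun_prop)).clm_apply continuous_const).enorm.measurable
    _ ≤ _ := by
        rw [← lintegral_const_mul' _ _ (by simp)]
        refine setLIntegral_mono' measurableSet_Ioi fun s _ ↦ ?_
        calc ENNReal.ofReal (s ^ (n + 1) / (n + 1)) * ‖fderiv ℝ f (x + s • (ω : E)) ω‖ₑ
            ≤ ENNReal.ofReal (s ^ (n + 1) / (n + 1)) * ‖fderiv ℝ f (x + s • (ω : E))‖ₑ := by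
              gcongr
              simpa [← ofReal_norm, hω] using (fderiv ℝ f (x + s • (ω : E))).le_opENorm ω
          _ = _ := by
              rw [ENNReal.ofReal_div_of_pos (by positivity), div_eq_mul_inv,
                show (n : ℝ) + 1 = (n + 1 : ℕ) by push_cast; rfl, ENNReal.ofReal_natCast]
              push_cast
              ring

theorem ofReal_integral_norm_div_norm_sub [NormedSpace ℝ F] [CompleteSpace F] {n : ℕ}
    (hd : finrank ℝ E = n + 2) {f : E → F} (hf : ContDiff ℝ 1 f) (hsupp : HasCompactSupport f)
    (x : E) :
    ENNReal.ofReal (∫ y, ‖f y‖ / ‖x - y‖ ∂μ) = ∫⁻ y, ENNReal.ofReal (‖f y‖ / ‖x - y‖) ∂μ := by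
  have hDf : Integrable (fderiv ℝ f) μ := hf.integrable_fderiv μ hsupp
  have hm : Measurable fun y ↦ ‖f y‖ / ‖x - y‖ := hf.continuous.norm.measurable.div (by fun_prop)
  rw [integral_eq_lintegral_of_nonneg_ae (ae_of_all _ fun y ↦ by positivity)
    hm.aestronglyMeasurable, ofReal_toReal]
  refine ne_top_of_le_ne_top ?_ (lintegral_norm_div_norm_sub_le μ hd hf hsupp x)
  exact mul_ne_top (by simp) hDf.hasFiniteIntegral.ne

theorem integral_norm_div_norm_sub_le [NormedSpace ℝ F] [CompleteSpace F] {n : ℕ}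
    (hd : finrank ℝ E = n + 2) {f : E → F} (hf : ContDiff ℝ 1 f) (hsupp : HasCompactSupport f)
    (x : E) :
    ∫ y, ‖f y‖ / ‖x - y‖ ∂μ ≤ (n + 1 : ℝ)⁻¹ * ∫ y, ‖fderiv ℝ f y‖ ∂μ := by
  have hDf : Integrable (fderiv ℝ f) μ := hf.integrable_fderiv μ hsupp
  rw [← ENNReal.ofReal_le_ofReal_iff (by positivity),
    ofReal_integral_norm_div_norm_sub μ hd hf hsupp,
    ENNReal.ofReal_mul (by positivity), ofReal_integral_norm_eq_lintegral_enorm hDf,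
    ENNReal.ofReal_inv_of_pos (by positivity), show (n : ℝ) + 1 = (n + 1 : ℕ) by push_cast; rfl,
    ENNReal.ofReal_natCast]
  exact_mod_cast lintegral_norm_div_norm_sub_le μ hd hf hsupp x

end Polar

instance : IsFiniteMeasure sphereMeasure :=
  inferInstanceAs (IsFiniteMeasure (volume : Measure R3).toSphere)

theorem finrank_R3 : finrank ℝ R3 = 1 + 2 := finrank_euclideanSpace_fin

theorem ofReal_mul_enorm_cosProp_le (f : R3 → ℂ) (x : R3) {t : ℝ} (ht : 0 ≤ t) :
    ENNReal.ofReal t * ‖cosProp f t x‖ₑ ≤ ENNReal.ofReal (1 / (4 * π)) *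
      ∫⁻ ω, (ENNReal.ofReal t * ‖f (x + t • (ω : R3))‖ₑ +
        ENNReal.ofReal (t ^ 2) * ‖fderiv ℝ f (x + t • (ω : R3))‖ₑ) ∂sphereMeasure := by
  have hω : ∀ ω : sphere (0 : R3) 1, ‖(ω : R3)‖ₑ = 1 := fun ω ↦ by
    rw [← ofReal_norm, norm_eq_of_mem_sphere ω, ofReal_one]
  have hF : ∀ ω : sphere (0 : R3) 1,
      ‖f (x + t • (ω : R3)) + t • fderiv ℝ f (x + t • (ω : R3)) ω‖ₑ ≤
        ‖f (x + t • (ω : R3))‖ₑ + ENNReal.ofReal t * ‖fderiv ℝ f (x + t • (ω : R3))‖ₑ := by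
    intro ω
    refine (enorm_add_le _ _).trans ?_
    rw [enorm_smul, Real.enorm_eq_ofReal ht]
    gcongr
    simpa [hω] using (fderiv ℝ f (x + t • (ω : R3))).le_opENorm ω
  calc ENNReal.ofReal t * ‖cosProp f t x‖ₑ
      ≤ ENNReal.ofReal t * (ENNReal.ofReal (1 / (4 * π)) * ∫⁻ ω, (‖f (x + t • (ω : R3))‖ₑ +
          ENNReal.ofReal t * ‖fderiv ℝ f (x + t • (ω : R3))‖ₑ) ∂sphereMeasure) := by
        rw [cosProp, enorm_smul, Real.enorm_eq_ofReal (by positivity)]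
        gcongr
        exact (enorm_integral_le_lintegral_enorm _).trans (lintegral_mono hF)
    _ = _ := by
        rw [mul_left_comm, ← lintegral_const_mul' _ _ ofReal_ne_top]
        simp only [mul_add, sq, ENNReal.ofReal_mul ht, mul_assoc]

theorem lintegral_ofReal_mul_enorm_cosProp_le {f : R3 → ℂ} (hf : ContDiff ℝ 1 f) (x : R3) :
    ∫⁻ t in Ioi 0, ENNReal.ofReal t * ‖cosProp f t x‖ₑ ≤ ENNReal.ofReal (1 / (4 * π)) *
      ((∫⁻ y, ENNReal.ofReal (‖f y‖ / ‖x - y‖)) + ∫⁻ y, ‖fderiv ℝ f y‖ₑ) := by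
  have hDf : Continuous (fderiv ℝ f) := hf.continuous_fderiv one_ne_zero
  have hfc : Continuous f := hf.continuous
  set A : ℝ → sphere (0 : R3) 1 → ℝ≥0∞ := fun t ω ↦ ENNReal.ofReal t * ‖f (x + t • (ω : R3))‖ₑ
  set B : ℝ → sphere (0 : R3) 1 → ℝ≥0∞ :=
    fun t ω ↦ ENNReal.ofReal (t ^ 2) * ‖fderiv ℝ f (x + t • (ω : R3))‖ₑ
  have hA : Measurable (Function.uncurry A) :=
    measurable_fst.ennreal_ofReal.mul (hfc.comp (by fun_prop)).enorm.measurable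
  have hB : Measurable (Function.uncurry B) :=
    (measurable_fst.pow_const 2).ennreal_ofReal.mul (hDf.comp (by fun_prop)).enorm.measurable
  have hA' : Measurable fun ω ↦ ∫⁻ t in Ioi 0, A t ω := hA.lintegral_prod_left'
  calc ∫⁻ t in Ioi 0, ENNReal.ofReal t * ‖cosProp f t x‖ₑ
      ≤ ∫⁻ t in Ioi 0, ENNReal.ofReal (1 / (4 * π)) * ∫⁻ ω, (A t ω + B t ω) ∂sphereMeasure :=
        setLIntegral_mono' measurableSet_Ioi fun t ht ↦
          ofReal_mul_enorm_cosProp_le f x (le_of_lt ht)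
    _ = ENNReal.ofReal (1 / (4 * π)) * ((∫⁻ ω, ∫⁻ t in Ioi 0, A t ω ∂volume ∂sphereMeasure) +
          ∫⁻ ω, ∫⁻ t in Ioi 0, B t ω ∂volume ∂sphereMeasure) := by
        rw [lintegral_const_mul' _ _ ofReal_ne_top,
          lintegral_lintegral_swap (hA.add hB).aemeasurable, ← lintegral_add_left hA']
        congr 1
        exact lintegral_congr fun ω ↦ lintegral_add_left (hA.comp measurable_prodMk_right) _
    _ = _ := by
        rw [lintegral_norm_div_norm_sub_eq volume finrank_R3 hfc x,
          ← lintegral_toSphere_lintegral_Ioi_add volume x hDf.enorm.measurable, finrank_R3]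
        simp only [pow_one]
        rfl

theorem weighted_cosine_reversed_Linfty_L1 (f : R3 → ℂ) (hf : ContDiff ℝ 1 f)
    (hsupp : HasCompactSupport f) :
    ∀ x : R3,
      (∫⁻ t in Set.Ioi (0 : ℝ), ENNReal.ofReal t * (‖cosProp f t x‖₊ : ℝ≥0∞) ≤
        ENNReal.ofReal ((1 / (4 * π)) *
          ((∫ y : R3, ‖f y‖ / ‖x - y‖) + ∫ y : R3, ‖fderiv ℝ f y‖))) ∧
      (1 / (4 * π)) * ((∫ y : R3, ‖f y‖ / ‖x - y‖) + ∫ y : R3, ‖fderiv ℝ f y‖) ≤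
        (1 / (2 * π)) * ∫ y : R3, ‖fderiv ℝ f y‖ := by
  intro x
  have hDf : Integrable (fderiv ℝ f) := hf.integrable_fderiv volume hsupp
  have hpot : 0 ≤ ∫ y : R3, ‖f y‖ / ‖x - y‖ := integral_nonneg fun y ↦ by positivity
  have hgrad : 0 ≤ ∫ y : R3, ‖fderiv ℝ f y‖ := integral_nonneg fun y ↦ by positivity
  have hle := integral_norm_div_norm_sub_le volume finrank_R3 hf hsupp x
  refine ⟨?_, ?_⟩
  · rw [ENNReal.ofReal_mul (by positivity), ENNReal.ofReal_add hpot hgrad,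
      ofReal_integral_norm_div_norm_sub volume finrank_R3 hf hsupp x,
      ofReal_integral_norm_eq_lintegral_enorm hDf]
    exact lintegral_ofReal_mul_enorm_cosProp_le hf x
  · calc (1 / (4 * π)) * ((∫ y : R3, ‖f y‖ / ‖x - y‖) + ∫ y : R3, ‖fderiv ℝ f y‖)
        ≤ (1 / (4 * π)) * (2 * ∫ y : R3, ‖fderiv ℝ f y‖) := by
          gcongr
          norm_num at hle
          linarith
      _ = (1 / (2 * π)) * ∫ y : R3, ‖fderiv ℝ f y‖ := by
          field_simp
          ring
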